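/- arXiv:1008.4910 — 5 statements merged into one kernel-verified Lean document; each statement's English description precedes it below -/
import Mathlib

section
/- Let q̄ denote the quotient seminorm on M/S, i.e. q̄(x + S) = inf_{s ∈ S} ‖x − s‖. Then for every finitely supported family (x_μ) with x_μ ∈ M_μ one has q̄((∑_μ x_μ) + S) = sup_μ q̄(x_μ + S). -/
/-!
Write `q̄(y) = infDist y S`. Decompose a competitor `s ∈ S` into graded pieces `s_μ ∈ S ∩ M_μ`.
Since the norm of a graded sum dominates the norm of each component, `‖x_μ - s_μ‖ ≤ ‖∑ x - s‖`;
this gives `sup_μ q̄(x_μ) ≤ q̄(∑ x)`, and also shows that `q̄(x_μ)` is approached by elements of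
`S ∩ M_μ`. Choosing such near-optimal `t_μ ∈ S ∩ M_μ`, with `t_μ = 0` where `x_μ = 0` so that `t`
is finitely supported, the sup-norm property gives `‖∑ x - ∑ t‖ = sup_μ ‖x_μ - t_μ‖`, whence the
reverse inequality.
-/

section

open Function Metric

variable {ι R M : Type*} [Ring R] [NormedAddCommGroup M] [Module R M]

lemma bddAbove_range_of_hasFiniteSupport {α : Type*} [Zero α] [Preorder α] [IsDirectedOrder α]
    {g : ι → α} (hg : HasFiniteSupport g) :
    BddAbove (Set.range g) :=
  ((hg.image g).insert 0).bddAbove.mono (range_subset_insert_image_support g)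

lemma Submodule.iInf_norm_sub_eq_infDist (S : Submodule R M) (y : M) :
    ⨅ s : S, ‖y - (s : M)‖ = infDist y S := by
  simp only [infDist_eq_iInf, dist_eq_norm]
  rfl

lemma Submodule.infDist_le_norm_sub (S : Submodule R M) (y : M) {s : M} (hs : s ∈ S) :
    infDist y S ≤ ‖y - s‖ :=
  (infDist_le_dist_of_mem hs).trans_eq (dist_eq_norm y s)

lemma Submodule.exists_finsum_eq_of_mem_iSup {q : ι → Submodule R M} {s : M}
    (hs : s ∈ ⨆ μ, q μ) :
    ∃ f : ι → M, (∀ μ, f μ ∈ q μ) ∧ HasFiniteSupport f ∧ ∑ᶠ μ, f μ = s := by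
  obtain ⟨f, hfq, rfl⟩ := (Submodule.mem_iSup_iff_exists_finsupp q s).1 hs
  exact ⟨f, hfq, f.hasFiniteSupport, finsum_eq_sum_of_support_subset f (by simp)⟩

def IsSupNormDecomposition (p : ι → Submodule R M) : Prop :=
  ∀ x : ι → M, (∀ μ, x μ ∈ p μ) → HasFiniteSupport x → ‖∑ᶠ μ, x μ‖ = ⨆ μ, ‖x μ‖

namespace IsSupNormDecomposition

variable {p : ι → Submodule R M} {S : Submodule R M}

lemma norm_le_norm_finsum (hp : IsSupNormDecomposition p) {x : ι → M} (hx : ∀ μ, x μ ∈ p μ)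
    (hxfin : HasFiniteSupport x) (μ : ι) : ‖x μ‖ ≤ ‖∑ᶠ ν, x ν‖ := by
  rw [hp x hx hxfin]
  exact le_ciSup (bddAbove_range_of_hasFiniteSupport (hxfin.comp norm_zero)) μ

lemma exists_mem_inf_norm_sub_le (hp : IsSupNormDecomposition p) (hS : S = ⨆ μ, S ⊓ p μ)
    {μ : ι} {y : M} (hy : y ∈ p μ) {s : M} (hs : s ∈ S) :
    ∃ t ∈ S ⊓ p μ, ‖y - t‖ ≤ ‖y - s‖ := by
  classical
  rw [hS] at hs
  obtain ⟨f, hf, hffin, rfl⟩ := Submodule.exists_finsum_eq_of_mem_iSup hs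
  refine ⟨f μ, hf μ, ?_⟩
  have hsingle : HasFiniteSupport (Pi.single μ y : ι → M) :=
    (Set.finite_singleton μ).subset Pi.support_single_subset
  have hsum : ∑ᶠ ν, ((Pi.single μ y : ι → M) ν - f ν) = y - ∑ᶠ ν, f ν := by
    rw [finsum_sub_distrib hsingle hffin,
      finsum_eq_single _ μ fun ν hν => Pi.single_eq_of_ne hν _, Pi.single_eq_same]
  have hcomp : ∀ ν, (Pi.single μ y : ι → M) ν - f ν ∈ p ν := fun ν =>
    sub_mem (by by_cases h : ν = μ <;> simp [h, hy]) (hf ν).2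
  simpa [hsum] using hp.norm_le_norm_finsum hcomp (hsingle.sub hffin) μ

lemma exists_mem_inf_norm_sub_lt (hp : IsSupNormDecomposition p) (hS : S = ⨆ μ, S ⊓ p μ)
    {μ : ι} {y : M} (hy : y ∈ p μ) {ε : ℝ} (hε : 0 < ε) :
    ∃ t ∈ S ⊓ p μ, ‖y - t‖ < infDist y S + ε := by
  obtain ⟨s, hs, hlt⟩ := (infDist_lt_iff ⟨0, S.zero_mem⟩).1 (lt_add_of_pos_right _ hε)
  obtain ⟨t, ht, hle⟩ := hp.exists_mem_inf_norm_sub_le hS hy hs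
  exact ⟨t, ht, hle.trans_lt (by rwa [← dist_eq_norm])⟩

lemma iSup_infDist_le_infDist_finsum (hp : IsSupNormDecomposition p) (hS : S = ⨆ μ, S ⊓ p μ)
    {x : ι → M} (hx : ∀ μ, x μ ∈ p μ) (hxfin : HasFiniteSupport x) :
    ⨆ μ, infDist (x μ) S ≤ infDist (∑ᶠ μ, x μ) S := by
  refine (le_infDist ⟨0, S.zero_mem⟩).2 fun s hs => Real.iSup_le (fun μ => ?_) dist_nonneg
  rw [SetLike.mem_coe, hS] at hs
  obtain ⟨f, hf, hffin, rfl⟩ := Submodule.exists_finsum_eq_of_mem_iSup hs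
  calc infDist (x μ) S ≤ ‖x μ - f μ‖ := S.infDist_le_norm_sub _ (hf μ).1
    _ ≤ ‖∑ᶠ ν, (x ν - f ν)‖ :=
      hp.norm_le_norm_finsum (fun ν => sub_mem (hx ν) (hf ν).2) (hxfin.sub hffin) μ
    _ = dist (∑ᶠ ν, x ν) (∑ᶠ ν, f ν) := by rw [finsum_sub_distrib hxfin hffin, dist_eq_norm]

lemma infDist_finsum_le_iSup_infDist (hp : IsSupNormDecomposition p) (hS : S = ⨆ μ, S ⊓ p μ)
    {x : ι → M} (hx : ∀ μ, x μ ∈ p μ) (hxfin : HasFiniteSupport x) :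
    infDist (∑ᶠ μ, x μ) S ≤ ⨆ μ, infDist (x μ) S := by
  have hzero : infDist (0 : M) S = 0 := infDist_zero_of_mem S.zero_mem
  refine le_of_forall_pos_le_add fun ε hε => ?_
  have hnear : ∀ μ, ∃ t ∈ S ⊓ p μ, ‖x μ - t‖ ≤ infDist (x μ) S + ε ∧ (x μ = 0 → t = 0) := by
    intro μ
    by_cases h0 : x μ = 0
    · exact ⟨0, zero_mem _, by simp [h0, hzero, hε.le], fun _ => rfl⟩
    · obtain ⟨t, ht, hlt⟩ := hp.exists_mem_inf_norm_sub_lt hS (hx μ) hε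
      exact ⟨t, ht, hlt.le, fun h => absurd h h0⟩
  choose t ht hnear ht0 using hnear
  have htfin : HasFiniteSupport t := hxfin.subset fun μ hμ h0 => hμ (ht0 μ h0)
  have hbdd : BddAbove (Set.range fun μ => infDist (x μ) S) :=
    bddAbove_range_of_hasFiniteSupport <|
      hxfin.subset fun μ hμ h0 => hμ (by simp only [h0, hzero])
  calc infDist (∑ᶠ μ, x μ) S ≤ ‖∑ᶠ μ, x μ - ∑ᶠ μ, t μ‖ :=
        S.infDist_le_norm_sub _ (finsum_induction (· ∈ S) S.zero_mem (fun _ _ => add_mem)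
          fun μ => (ht μ).1)
    _ = ⨆ μ, ‖x μ - t μ‖ := by
        rw [← finsum_sub_distrib hxfin htfin]
        exact hp _ (fun μ => sub_mem (hx μ) (ht μ).2) (hxfin.sub htfin)
    _ ≤ (⨆ μ, infDist (x μ) S) + ε :=
        Real.iSup_le (fun μ => (hnear μ).trans (by gcongr; exact le_ciSup hbdd μ))
          (add_nonneg (Real.iSup_nonneg fun _ => infDist_nonneg) hε.le)

end IsSupNormDecomposition

end

theorem stmt_6_general {K : Type*} [NontriviallyNormedField K] {M : Type*} [NormedAddCommGroup M]
    [NormedSpace K M] {ι : Type*} (p : ι → Submodule K M)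
    (hnorm : ∀ x : ι → M, (∀ μ, x μ ∈ p μ) → (Function.support x).Finite →
      ‖∑ᶠ μ, x μ‖ = ⨆ μ, ‖x μ‖)
    (S : Submodule K M) (hS : S = ⨆ μ, S ⊓ p μ)
    (x : ι → M) (hx : ∀ μ, x μ ∈ p μ) (hxfin : (Function.support x).Finite) :
    (⨅ s : S, ‖(∑ᶠ μ, x μ) - (s : M)‖) = ⨆ μ, ⨅ s : S, ‖x μ - (s : M)‖ := by
  simp only [Submodule.iInf_norm_sub_eq_infDist]
  exact le_antisymm (IsSupNormDecomposition.infDist_finsum_le_iSup_infDist hnorm hS hx hxfin)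
    (IsSupNormDecomposition.iSup_infDist_le_infDist_finsum hnorm hS hx hxfin)

/-- Let `M` be a normed space over a nontrivially normed field `K`, decomposed as the
internal direct sum of subspaces `(M_μ)`, with `‖∑_μ x_μ‖ = sup_μ ‖x_μ‖` for every
finitely supported family `(x_μ)` with `x_μ ∈ M_μ`. Let `S` be a graded subspace, i.e.
`S = ∑_μ (S ∩ M_μ)`, and let `q̄` be the quotient seminorm on `M/S`,
`q̄(x + S) = inf_{s ∈ S} ‖x − s‖`. Then for every finitely supported family `(x_μ)` with
`x_μ ∈ M_μ`, one has `q̄((∑_μ x_μ) + S) = sup_μ q̄(x_μ + S)`. -/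
theorem stmt_6 {K : Type*} [NontriviallyNormedField K] {M : Type*} [NormedAddCommGroup M]
    [NormedSpace K M] {ι : Type*} (p : ι → Submodule K M)
    (hindep : iSupIndep p) (hspan : ⨆ μ, p μ = ⊤)
    (hnorm : ∀ x : ι → M, (∀ μ, x μ ∈ p μ) → (Function.support x).Finite →
      ‖∑ᶠ μ, x μ‖ = ⨆ μ, ‖x μ‖)
    (S : Submodule K M) (hS : S = ⨆ μ, S ⊓ p μ)
    (x : ι → M) (hx : ∀ μ, x μ ∈ p μ) (hxfin : (Function.support x).Finite) :
    (⨅ s : S, ‖(∑ᶠ μ, x μ) - (s : M)‖) = ⨆ μ, ⨅ s : S, ‖x μ - (s : M)‖ :=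
  stmt_6_general p hnorm S hS x hx hxfin
end

section
/- If, in addition, K is complete and each subspace M_μ is finite-dimensional over K, then the graded subspace S is closed in M. -/
/-!
The sup-norm condition makes every coordinate projection `x ↦ x_μ` a linear map of norm at
most one, hence continuous. A graded subspace `S` contains the components of its elements, so
the `μ`-th component of a limit of elements of `S` is a limit of elements of `S ⊓ M_μ`; this
space is finite-dimensional over a complete field, hence closed, so every component of the
limit lies in `S`, and therefore so does the limit.
-/

open DirectSum

section Decomposition

variable {ι R M : Type*} [DecidableEq ι] [Semiring R] [AddCommMonoid M] [Module R M]
  {p : ι → Submodule R M} [Decomposition p]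

theorem finite_support_decompose (x : M) :
    (Function.support fun i => (decompose p x i : M)).Finite := by
  classical
  refine (decompose p x).support.finite_toSet.subset fun i hi => ?_
  simpa using hi

theorem finsum_decompose (x : M) : ∑ᶠ i, (decompose p x i : M) = x := by
  classical
  rw [finsum_eq_sum_of_support_subset _ (s := (decompose p x).support)
    fun i hi => by simpa using hi]
  exact sum_support_decompose p x

theorem Submodule.isHomogeneous_of_le_iSup_inf {S : Submodule R M} (hS : S ≤ ⨆ i, S ⊓ p i) :
    S.IsHomogeneous p := by
  intro i x hx
  refine Submodule.iSup_induction _ (motive := fun x => (decompose p x i : M) ∈ S) (hS hx)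
    (fun j y hy => ?_) (by simp) fun y z hy hz => by simpa using S.add_mem hy hz
  by_cases hji : j = i
  · subst hji
    rw [decompose_of_mem_same p hy.2]
    exact hy.1
  · rw [decompose_of_mem_ne p hy.2 hji]
    exact S.zero_mem

theorem Submodule.IsHomogeneous.isClosed [TopologicalSpace M] {S : Submodule R M}
    (hS : S.IsHomogeneous p) (hproj : ∀ i, Continuous fun x => (decompose p x i : M))
    (hclosed : ∀ i, IsClosed ((S ⊓ p i : Submodule R M) : Set M)) : IsClosed (S : Set M) := by
  refine isClosed_of_closure_subset fun x hx => (hS.mem_iff p).mpr fun i => ?_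
  have hmaps : Set.MapsTo (fun y => (decompose p y i : M)) S (S ⊓ p i : Submodule R M) :=
    fun y hy => ⟨(hS.mem_iff p).mp hy i, (decompose p y i).2⟩
  exact ((hclosed i).closure_subset (map_mem_closure (hproj i) hx hmaps)).1

end Decomposition

section SupNorm

variable {ι R M : Type*} [DecidableEq ι] [Semiring R] [SeminormedAddCommGroup M] [Module R M]
  {p : ι → Submodule R M} [Decomposition p]

theorem norm_decompose_le
    (hnorm : ∀ x : ι → M, (∀ i, x i ∈ p i) → (Function.support x).Finite →
      ‖∑ᶠ i, x i‖ = ⨆ i, ‖x i‖)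
    (x : M) (i : ι) : ‖(decompose p x i : M)‖ ≤ ‖x‖ := by
  have hfin := finite_support_decompose (p := p) x
  have hx : ‖x‖ = ⨆ j, ‖(decompose p x j : M)‖ := by
    conv_lhs => rw [← finsum_decompose (p := p) x]
    exact hnorm _ (fun j => (decompose p x j).2) hfin
  have hbdd : BddAbove (Set.range fun j => ‖(decompose p x j : M)‖) :=
    ((hfin.image _).insert 0).bddAbove.mono <|
      (Function.range_subset_insert_image_support _).trans <| Set.insert_subset_insert <|
        Set.image_mono <| Function.support_comp_subset norm_zero _
  exact hx ▸ le_ciSup hbdd i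

theorem continuous_decompose_apply
    (hnorm : ∀ x : ι → M, (∀ i, x i ∈ p i) → (Function.support x).Finite →
      ‖∑ᶠ i, x i‖ = ⨆ i, ‖x i‖)
    (i : ι) : Continuous fun x => (decompose p x i : M) :=
  AddMonoidHomClass.continuous_of_bound
    ((p i).subtype ∘ₗ component R ι (fun j => p j) i ∘ₗ (decomposeLinearEquiv p).toLinearMap) 1
    fun x => (one_mul ‖x‖).symm ▸ norm_decompose_le hnorm x i

end SupNorm

/-- Let `M` be a normed space over a complete nontrivially normed field `K`, decomposed
as the internal direct sum of finite-dimensional subspaces `(M_μ)`, with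
`‖∑_μ x_μ‖ = sup_μ ‖x_μ‖` for every finitely supported family `(x_μ)` with `x_μ ∈ M_μ`.
Then every graded subspace `S = ∑_μ (S ∩ M_μ)` is closed in `M`. -/
theorem stmt_7 {K : Type*} [NontriviallyNormedField K] [CompleteSpace K] {M : Type*}
    [NormedAddCommGroup M] [NormedSpace K M] {ι : Type*} (p : ι → Submodule K M)
    (hindep : iSupIndep p) (hspan : ⨆ μ, p μ = ⊤)
    (hfd : ∀ μ, FiniteDimensional K (p μ))
    (hnorm : ∀ x : ι → M, (∀ μ, x μ ∈ p μ) → (Function.support x).Finite →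
      ‖∑ᶠ μ, x μ‖ = ⨆ μ, ‖x μ‖)
    (S : Submodule K M) (hS : S = ⨆ μ, S ⊓ p μ) :
    IsClosed (S : Set M) := by
  classical
  let _ : Decomposition p :=
    ((isInternal_submodule_iff_iSupIndep_and_iSup_eq_top p).mpr
      ⟨hindep, hspan⟩).chooseDecomposition
  exact (Submodule.isHomogeneous_of_le_iSup_inf hS.le).isClosed
    (continuous_decompose_apply hnorm) fun μ => Submodule.closed_of_finiteDimensional _
end

section
/- The assignments S ↦ S ∩ M and T ↦ (topological closure of T in E) are mutually inverse, inclusion-preserving bijections between the set of closed π-invariant K-subspaces S of E and the set of π-invariant K-subspaces T of M. In particular, every closed π-invariant subspace S of E satisfies S = closure(S ∩ M), and every π-invariant subspace T of M satisfies closure(T) ∩ M = T. -/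
/-!
Write `M = ⨆ i, range (π i)`. A closed invariant `S` is the closure of `S ⊓ M` because every
`x ∈ S` is the limit of the partial sums `∑ i ∈ F, π i x`, which lie in `S ⊓ M`. Conversely, for
an invariant `T ≤ M`, each `π i` maps `closure T` into the closure of `T ⊓ range (π i)`, which is
finite-dimensional and hence closed; so `π i` maps `closure T` into `T`. An element of `M` has only
finitely many nonzero components `π i x` by orthogonality, so it is the finite sum of them, and
therefore lies in `T` as soon as it lies in `closure T`.
-/

open Filter

namespace Submodule

section Algebraic

variable {R E ι : Type*} [Semiring R] [AddCommMonoid E] [Module R E] {f : ι → E →ₗ[R] E}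

theorem apply_mem_iSup_range (i : ι) (x : E) : f i x ∈ ⨆ j, LinearMap.range (f j) :=
  le_iSup (fun j => LinearMap.range (f j)) i (LinearMap.mem_range_self _ x)

theorem exists_finset_apply_eq_zero_of_mem_iSup_range
    (horth : ∀ i j, i ≠ j → ∀ x, f i (f j x) = 0) {x : E}
    (hx : x ∈ ⨆ j, LinearMap.range (f j)) : ∃ F : Finset ι, ∀ i ∉ F, f i x = 0 := by
  classical
  induction hx using iSup_induction' with
  | mem j x hx =>
    obtain ⟨z, rfl⟩ := hx
    exact ⟨{j}, fun i hi => horth i j (by simpa using hi) z⟩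
  | zero => exact ⟨∅, fun i _ => map_zero _⟩
  | add x y _ _ hx hy =>
    obtain ⟨F, hF⟩ := hx
    obtain ⟨G, hG⟩ := hy
    refine ⟨F ∪ G, fun i hi => ?_⟩
    rw [Finset.mem_union, not_or] at hi
    rw [map_add, hF i hi.1, hG i hi.2, add_zero]

end Algebraic

section Topological

variable {R E ι : Type*} [Semiring R] [AddCommMonoid E] [Module R E] [TopologicalSpace E]
  {f : ι → E →ₗ[R] E}

theorem mem_topologicalClosure_inf_iSup_range [ContinuousAdd E] [ContinuousConstSMul R E] {S : Submodule R E}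
    (hS : ∀ i, ∀ x ∈ S, f i x ∈ S) {x : E} (hx : x ∈ S) (hsum : HasSum (fun i => f i x) x) :
    x ∈ (S ⊓ ⨆ j, LinearMap.range (f j)).topologicalClosure :=
  mem_closure_of_tendsto hsum <| Eventually.of_forall fun _ =>
    sum_mem fun i _ => ⟨hS i x hx, apply_mem_iSup_range i x⟩

theorem mem_of_mem_iSup_range_of_forall_apply_mem [T2Space E]
    (horth : ∀ i j, i ≠ j → ∀ x, f i (f j x) = 0) {T : Submodule R E} {x : E}
    (hx : x ∈ ⨆ j, LinearMap.range (f j)) (hsum : HasSum (fun i => f i x) x)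
    (hT : ∀ i, f i x ∈ T) : x ∈ T := by
  obtain ⟨F, hF⟩ := exists_finset_apply_eq_zero_of_mem_iSup_range horth hx
  rw [hsum.unique (hasSum_sum_of_ne_finset_zero hF)]
  exact sum_mem fun i _ => hT i

end Topological

end Submodule

theorem ContinuousLinearMap.apply_mem_of_mem_topologicalClosure {K E : Type*}
    [NontriviallyNormedField K] [CompleteSpace K] [AddCommGroup E] [Module K E]
    [TopologicalSpace E] [IsTopologicalAddGroup E] [ContinuousSMul K E] [T2Space E]
    (f : E →L[K] E) [FiniteDimensional K (LinearMap.range (f : E →ₗ[K] E))]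
    {T : Submodule K E} (hT : ∀ x ∈ T, f x ∈ T) {x : E} (hx : x ∈ T.topologicalClosure) :
    f x ∈ T := by
  have hclosed : IsClosed ((T ⊓ LinearMap.range (f : E →ₗ[K] E) : Submodule K E) : Set E) :=
    have := Submodule.finiteDimensional_of_le
      (inf_le_right : T ⊓ LinearMap.range (f : E →ₗ[K] E) ≤ _)
    Submodule.closed_of_finiteDimensional _
  have hmaps : Set.MapsTo f T (T ⊓ LinearMap.range (f : E →ₗ[K] E) : Submodule K E) :=
    fun y hy => ⟨hT y hy, LinearMap.mem_range_self _ y⟩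
  exact (hclosed.closure_subset (map_mem_closure f.continuous hx hmaps)).1

theorem stmt_8_general {K : Type*} [NontriviallyNormedField K] [CompleteSpace K]
    {E : Type*} [NormedAddCommGroup E] [NormedSpace K E] {ι : Type*}
    (π : ι → E →L[K] E)
    (horth : ∀ i j, i ≠ j → (π i).comp (π j) = 0)
    (hfd : ∀ i, FiniteDimensional K (LinearMap.range (π i : E →ₗ[K] E)))
    (hsum : ∀ x : E, HasSum (fun i => (π i) x) x) :
    (∀ S : Submodule K E, IsClosed (S : Set E) → (∀ i, ∀ x ∈ S, π i x ∈ S) →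
        ((∀ i, ∀ x ∈ S ⊓ ⨆ j, LinearMap.range (π j : E →ₗ[K] E), π i x ∈ S ⊓ ⨆ j, LinearMap.range (π j : E →ₗ[K] E)) ∧
          (S ⊓ ⨆ j, LinearMap.range (π j : E →ₗ[K] E)).topologicalClosure = S)) ∧
      (∀ T : Submodule K E, T ≤ (⨆ j, LinearMap.range (π j : E →ₗ[K] E)) → (∀ i, ∀ x ∈ T, π i x ∈ T) →
        ((∀ i, ∀ x ∈ T.topologicalClosure, π i x ∈ T.topologicalClosure) ∧
          T.topologicalClosure ⊓ (⨆ j, LinearMap.range (π j : E →ₗ[K] E)) = T)) := by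
  have horth' : ∀ i j, i ≠ j → ∀ x, π i (π j x) = 0 := fun i j hij x =>
    DFunLike.congr_fun (horth i j hij) x
  constructor
  · intro S hS hSinv
    refine ⟨fun i x hx => ⟨hSinv i x hx.1, Submodule.apply_mem_iSup_range i x⟩, ?_⟩
    exact le_antisymm (Submodule.topologicalClosure_minimal _ inf_le_left hS) fun x hx =>
      Submodule.mem_topologicalClosure_inf_iSup_range hSinv hx (hsum x)
  · intro T hTM hTinv
    have hclosure : ∀ i, ∀ x ∈ T.topologicalClosure, π i x ∈ T := fun i _ hx =>
      have := hfd i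
      (π i).apply_mem_of_mem_topologicalClosure (hTinv i) hx
    refine ⟨fun i x hx => T.le_topologicalClosure (hclosure i x hx), ?_⟩
    refine le_antisymm ?_ (le_inf T.le_topologicalClosure hTM)
    rintro x ⟨hxT, hxM⟩
    exact Submodule.mem_of_mem_iSup_range_of_forall_apply_mem horth' hxM (hsum x)
      fun i => hclosure i x hxT

/-- Let `E` be a normed space over a complete nontrivially normed field `K`, and let
`(π_i)` be a family of continuous idempotent, mutually orthogonal, finite-rank linear
projections on `E` with `∑_i π_i x = x` (summable) for all `x`. Let `M = ∑_i range(π_i)`.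
Then `S ↦ S ∩ M` and `T ↦ closure(T)` are mutually inverse, inclusion-preserving
bijections between closed `π`-invariant subspaces of `E` and `π`-invariant subspaces of
`M`: the two assignments are well defined (`S ∩ M` is `π`-invariant and contained in `M`;
`closure T` is closed and `π`-invariant) and every closed `π`-invariant `S` satisfies
`closure(S ∩ M) = S`, while every `π`-invariant `T ⊆ M` satisfies `closure(T) ∩ M = T`. -/
theorem stmt_8 {K : Type*} [NontriviallyNormedField K] [CompleteSpace K]
    {E : Type*} [NormedAddCommGroup E] [NormedSpace K E] {ι : Type*}
    (π : ι → E →L[K] E)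
    (hidem : ∀ i, (π i).comp (π i) = π i)
    (horth : ∀ i j, i ≠ j → (π i).comp (π j) = 0)
    (hfd : ∀ i, FiniteDimensional K (LinearMap.range (π i : E →ₗ[K] E)))
    (hsum : ∀ x : E, HasSum (fun i => (π i) x) x) :
    (∀ S : Submodule K E, IsClosed (S : Set E) → (∀ i, ∀ x ∈ S, π i x ∈ S) →
        ((∀ i, ∀ x ∈ S ⊓ ⨆ j, LinearMap.range (π j : E →ₗ[K] E), π i x ∈ S ⊓ ⨆ j, LinearMap.range (π j : E →ₗ[K] E)) ∧
          (S ⊓ ⨆ j, LinearMap.range (π j : E →ₗ[K] E)).topologicalClosure = S)) ∧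
      (∀ T : Submodule K E, T ≤ (⨆ j, LinearMap.range (π j : E →ₗ[K] E)) → (∀ i, ∀ x ∈ T, π i x ∈ T) →
        ((∀ i, ∀ x ∈ T.topologicalClosure, π i x ∈ T.topologicalClosure) ∧
          T.topologicalClosure ⊓ (⨆ j, LinearMap.range (π j : E →ₗ[K] E)) = T)) :=
  stmt_8_general π horth hfd hsum
end

section
/- If S is a closed π-invariant K-subspace of E with S ≠ 0, then S ∩ M ≠ 0. -/
theorem HasSum.exists_ne_zero {ι α : Type*} [AddCommMonoid α] [TopologicalSpace α] [T2Space α]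
    {f : ι → α} {a : α} (h : HasSum f a) (ha : a ≠ 0) : ∃ i, f i ≠ 0 := by
  by_contra! hf
  obtain rfl : f = 0 := funext hf
  exact ha (h.unique hasSum_zero)

theorem Submodule.inf_iSup_range_ne_bot {R M ι : Type*} [Semiring R] [AddCommMonoid M]
    [Module R M] [TopologicalSpace M] [T2Space M] (f : ι → M →ₗ[R] M) (S : Submodule R M)
    (hsum : ∀ x ∈ S, HasSum (fun i => f i x) x) (hinv : ∀ i, ∀ x ∈ S, f i x ∈ S) (hne : S ≠ ⊥) :
    S ⊓ ⨆ i, LinearMap.range (f i) ≠ ⊥ := by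
  obtain ⟨x, hxS, hx0⟩ := S.exists_mem_ne_zero_of_ne_bot hne
  obtain ⟨i, hi⟩ := (hsum x hxS).exists_ne_zero hx0
  exact (Submodule.ne_bot_iff _).2
    ⟨f i x, ⟨hinv i x hxS, Submodule.mem_iSup_of_mem i (LinearMap.mem_range_self _ _)⟩, hi⟩

theorem stmt_9_general {K : Type*} [NontriviallyNormedField K]
    {E : Type*} [NormedAddCommGroup E] [NormedSpace K E] {ι : Type*}
    (π : ι → E →L[K] E)
    (hsum : ∀ x : E, HasSum (fun i => (π i) x) x)
    (S : Submodule K E)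
    (hinv : ∀ i, ∀ x ∈ S, π i x ∈ S) (hne : S ≠ ⊥) :
    S ⊓ (⨆ j, LinearMap.range (π j : E →ₗ[K] E)) ≠ ⊥ :=
  Submodule.inf_iSup_range_ne_bot (fun i => (π i : E →ₗ[K] E)) S (fun x _ => hsum x) hinv hne

/-- Setup as in the weight-projection model: `E` a normed space over a complete
nontrivially normed field `K`, `(π_i)` continuous idempotent, mutually orthogonal,
finite-rank projections summing pointwise to the identity, `M = ∑_i range(π_i)`.
If `S` is a closed `π`-invariant subspace of `E` with `S ≠ 0`, then `S ∩ M ≠ 0`. -/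
theorem stmt_9 {K : Type*} [NontriviallyNormedField K] [CompleteSpace K]
    {E : Type*} [NormedAddCommGroup E] [NormedSpace K E] {ι : Type*}
    (π : ι → E →L[K] E)
    (hidem : ∀ i, (π i).comp (π i) = π i)
    (horth : ∀ i j, i ≠ j → (π i).comp (π j) = 0)
    (hfd : ∀ i, FiniteDimensional K (LinearMap.range (π i : E →ₗ[K] E)))
    (hsum : ∀ x : E, HasSum (fun i => (π i) x) x)
    (S : Submodule K E) (hclosed : IsClosed (S : Set E))
    (hinv : ∀ i, ∀ x ∈ S, π i x ∈ S) (hne : S ≠ ⊥) :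
    S ⊓ (⨆ j, LinearMap.range (π j : E →ₗ[K] E)) ≠ ⊥ :=
  stmt_9_general π hsum S hinv hne
end

section
/- Let w ∈ W and let I ⊆ B be a finite subset. The following are equivalent: (a) every reduced word (i_1, …, i_n) of w contains every element of I among its entries; (b) there exist a reduced word ω of w and a sublist ω' of ω without repeated entries whose set of entries is exactly I. Moreover, in case (b), the product w' of the simple reflections along ω' lies in W_I and satisfies ℓ(w') = |I| (so w' is a Coxeter element of W_I). -/
/-!
Everything rests on two consequences of the exchange condition: all reduced words of `w` use the
same letters, and a word without repeated letters is reduced. For (a) ⇒ (b), keep the first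
occurrence of each letter of `I` in a reduced word of `w`; (b) ⇒ (a) is the invariance of the
letters; and the word `ω'` of (b), having distinct letters, is a reduced word of length `|I|` in
the generators of `W_I`.

The exchange condition comes from the action of `W` on `W × ZMod 2` in which `s i` acts by
`(t, e) ↦ (s i * t * s i, e + [t = s i])`: the parity of the number of occurrences of a reflection
`t` in the right inversion sequence of a word depends only on the product of the word, and
multiplying that product by `t` on the right flips it. Telling the letters apart (`s i ≠ s j` for
`i ≠ j`) needs the Tits representation, in which `s i * s j` acts as a rotation of order `M i j`.
-/

noncomputable section

open Real

theorem LinearMap.one_add_comp_sub_one_comp_pow {R V E : Type*} [CommRing R] [AddCommGroup V]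
    [Module R V] [AddCommGroup E] [Module R E] (φ : E →ₗ[R] V) (κ : V →ₗ[R] E)
    (hκφ : κ ∘ₗ φ = LinearMap.id) (T : Module.End R E) (n : ℕ) :
    (1 + φ ∘ₗ (T - 1) ∘ₗ κ) ^ n = 1 + φ ∘ₗ (T ^ n - 1) ∘ₗ κ := by
  have hκφ' (x : E) : κ (φ x) = x := LinearMap.congr_fun hκφ x
  induction n with
  | zero => simp
  | succ n ih =>
    ext v
    simp only [pow_succ, ih, Module.End.mul_apply, LinearMap.add_apply, Module.End.one_apply,
      LinearMap.comp_apply, LinearMap.sub_apply, map_add, map_sub, hκφ']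
    abel

theorem Module.preReflection_mul_preReflection_pow_eq_one {V : Type*} [AddCommGroup V]
    [Module ℝ V] {x y : V} {f g : Module.Dual ℝ V} {m : ℕ} (hm : 2 ≤ m) (hfx : f x = 2)
    (hgy : g y = 2) (hfy : f y = -2 * cos (π / m)) (hgx : g x = -2 * cos (π / m)) :
    (Module.preReflection x f * Module.preReflection y g) ^ m = 1 := by
  set θ := π / m with hθ
  set c := cos θ
  set s := sin θ
  have hs : 0 < s := sin_pos_of_pos_of_lt_pi (by positivity) (by
    rw [hθ, div_lt_iff₀ (by positivity)]
    exact lt_mul_of_one_lt_right pi_pos (by exact_mod_cast hm))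
  have hsc : s ^ 2 + c ^ 2 = 1 := sin_sq_add_cos_sq θ
  let ζ : ℂ := Complex.exp (↑(2 * θ) * Complex.I)
  have hζ : ζ ^ m = 1 := by
    rw [← Complex.exp_nat_mul, ← Complex.exp_two_pi_mul_I]
    congr 1
    have : (m : ℂ) ≠ 0 := by exact_mod_cast (by omega : m ≠ 0)
    rw [hθ]
    push_cast
    field_simp
  have hζre : ζ.re = 2 * c ^ 2 - 1 := by rw [Complex.exp_ofReal_mul_I_re, cos_two_mul]
  have hζim : ζ.im = 2 * s * c := by rw [Complex.exp_ofReal_mul_I_im, sin_two_mul]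
  -- `φ` identifies `ℂ` with the plane spanned by `x, y` through the basis `x, (y + c • x) / s`,
  -- orthonormal for the form with polar maps `f / 2, g / 2`, and `κ` projects onto that plane
  -- along `ker f ⊓ ker g`. In these coordinates the product of the reflections is multiplication
  -- by `ζ = exp (2πi / m)`, and it fixes `ker f ⊓ ker g`.
  let φ : ℂ →ₗ[ℝ] V := Complex.reLm.smulRight x + (s⁻¹ • Complex.imLm).smulRight (y + c • x)
  let κ : V →ₗ[ℝ] ℂ := Complex.equivRealProdLm.symm.toLinearMap ∘ₗ
    ((2⁻¹ : ℝ) • f).prod ((2 * s)⁻¹ • (g + c • f))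
  have hφ (z : ℂ) : φ z = z.re • x + (s⁻¹ * z.im) • (y + c • x) := rfl
  have hκre (v : V) : (κ v).re = 2⁻¹ * f v := rfl
  have hκim (v : V) : (κ v).im = (2 * s)⁻¹ * (g v + c * f v) := rfl
  have hκφ : κ ∘ₗ φ = LinearMap.id := by
    ext z : 1
    apply Complex.ext
    · rw [LinearMap.comp_apply, hκre, hφ]
      simp only [map_add, map_smul, hfx, hfy, smul_eq_mul, LinearMap.id_apply]
      field_simp
      ring
    · rw [LinearMap.comp_apply, hκim, hφ]
      simp only [map_add, map_smul, hfx, hfy, hgx, hgy, smul_eq_mul, LinearMap.id_apply]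
      field_simp
      linear_combination -z.im * hsc
  have hA : Module.preReflection x f * Module.preReflection y g =
      1 + φ ∘ₗ (Algebra.lmul ℝ ℂ ζ - 1) ∘ₗ κ := by
    refine LinearMap.ext fun v => ?_
    have hre : ((ζ - 1) * κ v).re = -f v - c * g v := by
      rw [Complex.mul_re, Complex.sub_re, Complex.sub_im, Complex.one_re, Complex.one_im, hζre,
        hζim, hκre, hκim]
      field_simp
      ring
    have him : ((ζ - 1) * κ v).im = -s * g v := by
      rw [Complex.mul_im, Complex.sub_re, Complex.sub_im, Complex.one_re, Complex.one_im, hζre,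
        hζim, hκre, hκim]
      field_simp
      linear_combination (2 * c * f v + 2 * g v) * hsc
    simp only [Module.End.mul_apply, Module.preReflection_apply, map_sub, map_smul, hfy,
      LinearMap.add_apply, Module.End.one_apply, LinearMap.comp_apply,
      LinearMap.sub_apply, Algebra.coe_lmul_eq_mul, LinearMap.mul_apply']
    rw [← map_sub, ← sub_one_mul, hφ, hre, him, show s⁻¹ * (-s * g v) = -g v by field_simp]
    module
  rw [hA, LinearMap.one_add_comp_sub_one_comp_pow φ κ hκφ, ← map_pow, hζ, map_one, sub_self,
    LinearMap.zero_comp, LinearMap.comp_zero, add_zero]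

namespace CoxeterMatrix

variable {B : Type*} (M : CoxeterMatrix B)

/-- `v ↦ 2 B(e_i, v)` for the Tits form `B(e_i, e_j) = -cos (π / M i j)`. For `M i j = 0`, Lean's
`π / 0 = 0` gives `B(e_i, e_j) = -1 = -cos (π / ∞)`, the correct value. -/
def titsDual (i : B) : Module.Dual ℝ (B →₀ ℝ) :=
  Finsupp.linearCombination ℝ fun j => -2 * cos (π / M i j)

def titsReflection (i : B) : Module.End ℝ (B →₀ ℝ) :=
  Module.preReflection (Finsupp.single i 1) (M.titsDual i)

theorem titsDual_single (i j : B) :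
    M.titsDual i (Finsupp.single j 1) = -2 * cos (π / M i j) := by
  simp [titsDual]

theorem titsDual_single_self (i : B) : M.titsDual i (Finsupp.single i 1) = 2 := by
  rw [titsDual_single, M.diagonal, Nat.cast_one, div_one, cos_pi]
  norm_num

theorem isLiftable_titsReflection : M.IsLiftable M.titsReflection := by
  intro i j
  obtain rfl | hij := eq_or_ne i j
  · rw [M.diagonal, pow_one]
    exact LinearMap.ext fun v => Module.involutive_preReflection (M.titsDual_single_self i) v
  obtain hM | hM := eq_or_ne (M i j) 0
  · rw [hM, pow_zero]
  refine Module.preReflection_mul_preReflection_pow_eq_one ?_ (M.titsDual_single_self i)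
    (M.titsDual_single_self j) (M.titsDual_single i j) (by rw [titsDual_single, M.symmetric])
  have := M.off_diagonal i j hij
  omega

end CoxeterMatrix

namespace CoxeterSystem

variable {B W : Type*} [Group W] {M : CoxeterMatrix B} (cs : CoxeterSystem M W)

theorem simple_injective : Function.Injective cs.simple := by
  intro i j hij
  by_contra hne
  have h := congrArg (fun w => cs.lift ⟨M.titsReflection, M.isLiftable_titsReflection⟩ w
    (Finsupp.single i 1) i) hij
  simp only [lift_apply_simple, CoxeterMatrix.titsReflection, Module.preReflection_apply,
    CoxeterMatrix.titsDual_single_self, Finsupp.sub_apply, Finsupp.smul_apply,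
    Finsupp.single_eq_same, Finsupp.single_eq_of_ne hne] at h
  norm_num at h

theorem rightInvSeq_alternatingWord (i j : B) (n : ℕ) :
    cs.rightInvSeq (alternatingWord i j n) =
      (List.range n).reverse.map fun k => cs.simple j * (cs.simple i * cs.simple j) ^ k := by
  induction n generalizing i j with
  | zero => rfl
  | succ n ih =>
    rw [alternatingWord_succ, rightInvSeq_concat, ih, List.range_succ_eq_map]
    simp only [List.map_reverse, List.map_map, List.reverse_cons, List.concat_eq_append,
      List.map_append, List.map_cons, List.map_nil, pow_zero, mul_one]
    congr 3
    funext k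
    simp only [Function.comp_apply, MulAut.conj_apply, inv_simple]
    rw [← mul_pow_mul, pow_succ]
    simp only [mul_assoc]

theorem prod_map_alternatingWord_two_mul {G : Type*} [Monoid G] (f : B → G) (i j : B) (m : ℕ) :
    ((alternatingWord i j (2 * m)).map f).prod = (f i * f j) ^ m := by
  induction m with
  | zero => simp [alternatingWord]
  | succ m ih =>
    rw [Nat.mul_succ, alternatingWord_succ', alternatingWord_succ', List.map_cons, List.map_cons,
      List.prod_cons, List.prod_cons, ih, pow_succ', mul_assoc]
    simp

theorem even_count_rightInvSeq_alternatingWord [DecidableEq W] (i j : B) (t : W) :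
    Even ((cs.rightInvSeq (alternatingWord i j (2 * M i j))).count t) := by
  have hperiodic (k : ℕ) : cs.simple j * (cs.simple i * cs.simple j) ^ (M i j + k) =
      cs.simple j * (cs.simple i * cs.simple j) ^ k := by
    rw [pow_add, simple_mul_simple_pow, one_mul]
  rw [rightInvSeq_alternatingWord, List.map_reverse, List.count_reverse, two_mul, List.range_add,
    List.map_append, List.map_map, List.count_append]
  simp only [Function.comp_def, hperiodic]
  exact Even.add_self _

section Parity

variable [DecidableEq W]

def parityPerm (i : B) : Equiv.Perm (W × ZMod 2) :=
  Function.Involutive.toPerm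
    (fun p => (cs.simple i * p.1 * cs.simple i, p.2 + if p.1 = cs.simple i then 1 else 0))
    (by
      rintro ⟨t, e⟩
      have hconj : cs.simple i * (cs.simple i * t * cs.simple i) * cs.simple i = t := by
        simp [mul_assoc]
      have hfix : cs.simple i * t * cs.simple i = cs.simple i ↔ t = cs.simple i := by
        constructor <;> intro h
        · rw [← hconj, h, simple_mul_simple_cancel_right]
        · rw [h, simple_mul_simple_self, one_mul]
      ext
      · exact hconj
      · simp only [hfix, add_assoc]
        split_ifs <;> simp [CharTwo.add_self_eq_zero])

theorem parityPerm_apply (i : B) (t : W) (e : ZMod 2) :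
    cs.parityPerm i (t, e) =
      (cs.simple i * t * cs.simple i, e + if t = cs.simple i then 1 else 0) :=
  rfl

theorem prod_map_parityPerm_apply (ω : List B) (t : W) (e : ZMod 2) :
    (ω.map cs.parityPerm).prod (t, e) =
      (cs.wordProd ω * t * (cs.wordProd ω)⁻¹, e + (cs.rightInvSeq ω).count t) := by
  induction ω generalizing t e with
  | nil => simp
  | cons i ω ih =>
    rw [List.map_cons, List.prod_cons, Equiv.Perm.mul_apply, ih]
    have hfix : cs.wordProd ω * t * (cs.wordProd ω)⁻¹ = cs.simple i ↔
        (cs.wordProd ω)⁻¹ * cs.simple i * cs.wordProd ω = t := by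
      constructor <;> intro h <;> rw [← h] <;> group
    refine Prod.ext ?_ ?_
    · simp only [parityPerm_apply, wordProd_cons, mul_inv_rev, inv_simple]
      group
    · simp only [parityPerm_apply, rightInvSeq, List.count_cons, beq_iff_eq, hfix]
      split_ifs <;> push_cast <;> ring

theorem isLiftable_parityPerm : M.IsLiftable cs.parityPerm := by
  intro i j
  ext ⟨t, e⟩ : 1
  rw [← prod_map_alternatingWord_two_mul, prod_map_parityPerm_apply,
    prod_alternatingWord_eq_mul_pow]
  obtain ⟨r, hr⟩ := cs.even_count_rightInvSeq_alternatingWord i j t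
  simp [hr, ← two_mul, show (2 : ZMod 2) = 0 from rfl]

def parityRep : W →* Equiv.Perm (W × ZMod 2) :=
  cs.lift ⟨cs.parityPerm, cs.isLiftable_parityPerm⟩

theorem parityRep_wordProd_apply (ω : List B) (t : W) (e : ZMod 2) :
    cs.parityRep (cs.wordProd ω) (t, e) =
      (cs.wordProd ω * t * (cs.wordProd ω)⁻¹, e + (cs.rightInvSeq ω).count t) := by
  rw [← prod_map_parityPerm_apply, wordProd, map_list_prod, List.map_map]
  simp [parityRep, Function.comp_def]

theorem IsReflection.parityRep_apply_self {t : W} (ht : cs.IsReflection t) (e : ZMod 2) :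
    cs.parityRep t (t, e) = (t, e + 1) := by
  obtain ⟨v, i, rfl⟩ := ht
  obtain ⟨ρ, rfl⟩ := cs.wordProd_surjective v
  set n : ZMod 2 := (((cs.rightInvSeq ρ).count (cs.simple i) : ℕ) : ZMod 2)
  have hinv : (cs.parityRep (cs.wordProd ρ))⁻¹ (cs.wordProd ρ * cs.simple i * (cs.wordProd ρ)⁻¹, e)
      = (cs.simple i, e - n) := by
    rw [Equiv.Perm.inv_eq_iff_eq, parityRep_wordProd_apply, sub_add_cancel]
  have hsimple : cs.parityRep (cs.simple i) (cs.simple i, e - n) = (cs.simple i, e - n + 1) := by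
    simpa using cs.parityRep_wordProd_apply [i] (cs.simple i) (e - n)
  rw [map_mul, map_mul, map_inv, Equiv.Perm.mul_apply, Equiv.Perm.mul_apply, hinv, hsimple,
    parityRep_wordProd_apply]
  simp only [Prod.mk.injEq, true_and]
  ring

end Parity

theorem mem_rightInvSeq_of_isRightInversion {ω : List B} {t : W}
    (ht : cs.IsRightInversion (cs.wordProd ω) t) : t ∈ cs.rightInvSeq ω := by
  classical
  by_contra hnot
  obtain ⟨σ, hσ, hσω⟩ := cs.exists_isReduced (cs.wordProd ω * t)
  have hparity : (cs.parityRep (cs.wordProd ω * t) (t, 0)).2 = 1 := by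
    rw [map_mul, Equiv.Perm.mul_apply, ht.1.parityRep_apply_self, parityRep_wordProd_apply,
      List.count_eq_zero_of_not_mem hnot, Nat.cast_zero, add_zero, zero_add]
  rw [hσω, parityRep_wordProd_apply, zero_add] at hparity
  have hcount : (cs.rightInvSeq σ).count t ≠ 0 := by
    intro h
    simp [h] at hparity
  have hinv := cs.isRightInversion_of_mem_rightInvSeq hσ
    (List.count_pos_iff.mp (Nat.pos_of_ne_zero hcount))
  have hlt := hinv.2
  rw [← hσω, mul_assoc, ht.1.mul_self, mul_one] at hlt
  exact lt_asymm ht.2 hlt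

theorem IsReduced.exists_sublist_wordProd_eq_mul_simple {ω : List B} (hω : cs.IsReduced ω) {j : B}
    (hj : cs.IsRightDescent (cs.wordProd ω) j) :
    ∃ ω', ω'.Sublist ω ∧ cs.IsReduced ω' ∧ cs.wordProd ω' = cs.wordProd ω * cs.simple j := by
  have hmem := cs.mem_rightInvSeq_of_isRightInversion
    ((cs.isRightInversion_simple_iff_isRightDescent _ _).mpr hj)
  obtain ⟨k, hk, hkj⟩ := List.mem_iff_getElem.mp hmem
  rw [length_rightInvSeq] at hk
  have hprod : cs.wordProd (ω.eraseIdx k) = cs.wordProd ω * cs.simple j := by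
    rw [← wordProd_mul_getD_rightInvSeq, List.getD_eq_getElem _ _ (by simpa using hk), hkj]
  refine ⟨ω.eraseIdx k, List.eraseIdx_sublist ω k, ?_, hprod⟩
  have := (cs.isRightDescent_iff).mp hj
  rw [IsReduced, hprod, List.length_eraseIdx_of_lt hk, ← hω.eq]
  omega

theorem IsReduced.append_singleton {ω : List B} (hω : cs.IsReduced ω) {j : B}
    (hj : ¬cs.IsRightDescent (cs.wordProd ω) j) : cs.IsReduced (ω ++ [j]) := by
  rw [IsReduced, wordProd_append, wordProd_singleton, (cs.not_isRightDescent_iff).mp hj, hω.eq,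
    List.length_append, List.length_singleton]

theorem exists_reduced_sublist (ω : List B) :
    ∃ ω', ω'.Sublist ω ∧ cs.IsReduced ω' ∧ cs.wordProd ω' = cs.wordProd ω := by
  induction ω using List.reverseRecOn with
  | nil => exact ⟨[], List.Sublist.refl _, by simp [IsReduced], rfl⟩
  | append_singleton ω j ih =>
    obtain ⟨ω₀, hsub, hred, hprod⟩ := ih
    rw [wordProd_append, wordProd_singleton, ← hprod]
    by_cases hj : cs.IsRightDescent (cs.wordProd ω₀) j
    · obtain ⟨ω₁, hsub₁, hred₁, hprod₁⟩ := hred.exists_sublist_wordProd_eq_mul_simple cs hj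
      exact ⟨ω₁, (hsub₁.trans hsub).trans (List.sublist_append_left ω [j]), hred₁, hprod₁⟩
    · exact ⟨ω₀ ++ [j], hsub.append (List.Sublist.refl [j]), hred.append_singleton cs hj,
        by rw [wordProd_append, wordProd_singleton]⟩

theorem mem_of_simple_eq_wordProd {j : B} {ω : List B} (h : cs.simple j = cs.wordProd ω) :
    j ∈ ω := by
  obtain ⟨ω₀, hsub, hred, hprod⟩ := cs.exists_reduced_sublist ω
  have hlen : ω₀.length = 1 := by rw [← hred.eq, hprod, ← h, length_simple]
  obtain ⟨i, rfl⟩ := List.length_eq_one_iff.mp hlen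
  rw [wordProd_singleton] at hprod
  exact hsub.subset (List.mem_singleton.mpr (cs.simple_injective (hprod.trans h.symm)).symm)

theorem mem_of_isRightDescent {ω : List B} {j : B} (hj : cs.IsRightDescent (cs.wordProd ω) j) :
    j ∈ ω := by
  obtain ⟨ω₀, hsub, hred, hprod⟩ := cs.exists_reduced_sublist ω
  rw [← hprod] at hj
  obtain ⟨ω₁, hsub₁, -, hprod₁⟩ := hred.exists_sublist_wordProd_eq_mul_simple cs hj
  have hsimple : cs.simple j = cs.wordProd (ω₀.reverse ++ ω₁) := by
    rw [wordProd_append, wordProd_reverse, hprod₁, inv_mul_cancel_left]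
  rcases List.mem_append.mp (cs.mem_of_simple_eq_wordProd hsimple) with h | h
  · exact hsub.subset (List.mem_reverse.mp h)
  · exact hsub.subset (hsub₁.subset h)

theorem IsReduced.subset_of_wordProd_eq {ω ω' : List B} (hω : cs.IsReduced ω)
    (hω' : cs.IsReduced ω') (h : cs.wordProd ω = cs.wordProd ω') : ω' ⊆ ω := by
  induction ω' using List.reverseRecOn generalizing ω with
  | nil => exact List.nil_subset ω
  | append_singleton v a ih =>
    have hv : cs.IsReduced v := by simpa using hω'.take v.length
    have hdesc : cs.IsRightDescent (cs.wordProd ω) a := by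
      rw [IsRightDescent, h, hω'.eq, wordProd_append, wordProd_singleton,
        simple_mul_simple_cancel_right, hv.eq, List.length_append, List.length_singleton]
      omega
    obtain ⟨ω₁, hsub₁, hred₁, hprod₁⟩ := hω.exists_sublist_wordProd_eq_mul_simple cs hdesc
    have hv₁ : cs.wordProd ω₁ = cs.wordProd v := by
      rw [hprod₁, h, wordProd_append, wordProd_singleton, simple_mul_simple_cancel_right]
    exact List.append_subset.mpr ⟨List.Subset.trans (ih hred₁ hv hv₁) hsub₁.subset,
      by simpa using cs.mem_of_isRightDescent hdesc⟩

theorem isReduced_of_nodup {ω : List B} (hω : ω.Nodup) : cs.IsReduced ω := by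
  induction ω using List.reverseRecOn with
  | nil => simp [IsReduced]
  | append_singleton ω j ih =>
    obtain ⟨hω, -, hj⟩ := List.nodup_append.mp hω
    exact (ih hω).append_singleton cs fun hdesc =>
      hj j (cs.mem_of_isRightDescent hdesc) j (List.mem_singleton_self j) rfl

theorem wordProd_mem_closure_simple_image {I : Set B} {ω : List B} (hω : ∀ i ∈ ω, i ∈ I) :
    cs.wordProd ω ∈ Subgroup.closure (cs.simple '' I) :=
  Subgroup.list_prod_mem _ fun _ hx => by
    obtain ⟨i, hi, rfl⟩ := List.mem_map.mp hx
    exact Subgroup.subset_closure ⟨i, hω i hi, rfl⟩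

end CoxeterSystem

end

/-- Let `(W, S)` be a Coxeter system with simple reflections indexed by `B`, `w ∈ W`,
and `I ⊆ B` a finite subset. The following are equivalent: (a) every reduced word of `w`
contains every element of `I` among its entries; (b) some reduced word `ω` of `w` has a
sublist `ω'` without repeated entries whose set of entries is exactly `I`. Moreover, in
case (b), the product `w'` of the simple reflections along `ω'` lies in `W_I` and has
length `|I|` (so `w'` is a Coxeter element of `W_I`). -/
theorem stmt_13 {B W : Type*} [Group W] {M : CoxeterMatrix B} (cs : CoxeterSystem M W)
    (w : W) (I : Finset B) :
    ((∀ ω : List B, cs.IsReduced ω → cs.wordProd ω = w → ∀ i ∈ I, i ∈ ω) ↔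
      ∃ ω ω' : List B, cs.IsReduced ω ∧ cs.wordProd ω = w ∧ ω'.Sublist ω ∧ ω'.Nodup ∧
        ∀ i, i ∈ ω' ↔ i ∈ I) ∧
    (∀ ω ω' : List B, cs.IsReduced ω → cs.wordProd ω = w → ω'.Sublist ω → ω'.Nodup →
      (∀ i, i ∈ ω' ↔ i ∈ I) →
      cs.wordProd ω' ∈ Subgroup.closure (cs.simple '' ↑I) ∧
        cs.length (cs.wordProd ω') = I.card) := by
  classical
  refine ⟨⟨fun hall => ?_, ?_⟩, fun ω ω' _ _ _ hnd hI => ⟨?_, ?_⟩⟩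
  · obtain ⟨ω, hω, rfl⟩ := cs.exists_isReduced w
    refine ⟨ω, ω.dedup.filter (· ∈ I), hω, rfl, List.filter_sublist.trans ω.dedup_sublist,
      ω.nodup_dedup.filter _, fun i => ?_⟩
    simpa using fun hi => hall ω hω rfl i hi
  · rintro ⟨σ, σ', hσ, rfl, hsub, -, hI⟩ ω hω hw i hi
    exact hω.subset_of_wordProd_eq cs hσ hw (hsub.subset ((hI i).2 hi))
  · exact cs.wordProd_mem_closure_simple_image fun i hi => (hI i).1 hi
  · have hI' : ω'.toFinset = I := Finset.ext fun i => by simpa using hI i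
    rw [(cs.isReduced_of_nodup hnd).eq, ← hI', List.toFinset_card_of_nodup hnd]
end
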